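/- arXiv:1911.05720 — 3 statements merged into one kernel-verified Lean document; each statement's English description precedes it below -/
import Mathlib

section
/- Let f : ℝ → ℝ be monotone increasing and differentiable with f(0) = 0, let L > 0, let t* = min{1/(2|f(L)|), 1/(2|f(−L)|)}, and fix t ∈ [0, t*). Suppose that for all x ∈ (0, L]: x·(∂_x ℒ₁(t f(x))/2 + t f′(0)) ≥ ℒ₁(t f(x)) and (ℒ₁(t f(x)) − ℒ₁(t f(−x)))/(2x) ≥ t f′(0). Define α_f(L,t) = ℒ₁(t f(L))/L² − t f′(0)/L and γ_f(t) = t f′(0). Then for any real numbers a, b such that ℒ₁(t f(x)) ≤ a·x² + b·x for all x ∈ [−L, L], it holds that α_f(L,t)·x² + γ_f(t)·x ≤ a·x² + b·x for all x ∈ [−L, L]. -/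
/-
The bound `ℒ₁(t f(x)) ≤ a x² + b x` is an equality at `x = 0`, so `a x² + b x − ℒ₁(t f(x))` has a
local minimum there and its derivative `b − t f′(0)` vanishes, since `ℒ₁′(0) = 1`. Hence
`b = γ_f(t)`, and evaluating the bound at `x = L` gives `a ≥ α_f(L,t)`.
-/

open Real

/-- `ℒ₁(y) = -log(1 - 2y)/2`. -/
noncomputable def L1 (y : ℝ) : ℝ := -Real.log (1 - 2 * y) / 2

open Filter Topology

theorem hasDerivAt_L1 {y : ℝ} (hy : 1 - 2 * y ≠ 0) : HasDerivAt L1 (1 - 2 * y)⁻¹ y := by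
  have h := ((((hasDerivAt_id' y).const_mul 2).const_sub 1).log hy).neg.div_const 2
  exact h.congr_deriv (by field_simp)

theorem L1_zero : L1 0 = 0 := by
  simp [L1]

theorem HasDerivAt.L1_comp_of_eq_zero {g : ℝ → ℝ} {g' x : ℝ} (hg : HasDerivAt g g' x)
    (hgx : g x = 0) : HasDerivAt (fun y => L1 (g y)) g' x := by
  have h := (hasDerivAt_L1 (y := g x) (by rw [hgx]; norm_num)).comp x hg
  exact h.congr_deriv (by simp [hgx])

theorem HasDerivAt.eq_of_eventuallyLE_of_eq {f g : ℝ → ℝ} {f' g' x : ℝ}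
    (hf : HasDerivAt f f' x) (hg : HasDerivAt g g' x) (hle : f ≤ᶠ[𝓝 x] g) (heq : f x = g x) :
    f' = g' := by
  have hmin : IsLocalMin (fun y => g y - f y) x := by
    filter_upwards [hle] with y hy
    simp only [heq, sub_self, sub_nonneg, hy]
  linarith [hmin.hasDerivAt_eq_zero (hg.sub hf)]

theorem hasDerivAt_quadratic_zero (a b : ℝ) : HasDerivAt (fun x : ℝ => a * x ^ 2 + b * x) b 0 := by
  have h := ((hasDerivAt_pow 2 (0 : ℝ)).const_mul a).add ((hasDerivAt_id' (0 : ℝ)).const_mul b)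
  exact h.congr_deriv (by simp)

theorem L1_quadratic_bound_optimal_general
    (f : ℝ → ℝ) (hdiff : Differentiable ℝ f) (hf0 : f 0 = 0)
    (L : ℝ) (hL : 0 < L) (t : ℝ) :
    ∀ a b : ℝ,
      (∀ x ∈ Set.Icc (-L) L, L1 (t * f x) ≤ a * x ^ 2 + b * x) →
      ∀ x ∈ Set.Icc (-L) L,
        (L1 (t * f L) / L ^ 2 - t * deriv f 0 / L) * x ^ 2 + (t * deriv f 0) * x ≤
          a * x ^ 2 + b * x := by
  intro a b hab x _
  have hnhds : Set.Icc (-L) L ∈ 𝓝 (0 : ℝ) := Icc_mem_nhds (by linarith) hL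
  have hcomp : HasDerivAt (fun y => L1 (t * f y)) (t * deriv f 0) 0 :=
    ((hdiff 0).hasDerivAt.const_mul t).L1_comp_of_eq_zero (by simp [hf0])
  have hb : t * deriv f 0 = b :=
    hcomp.eq_of_eventuallyLE_of_eq (hasDerivAt_quadratic_zero a b)
      (eventually_of_mem hnhds hab) (by simp [hf0, L1_zero])
  subst hb
  have ha : L1 (t * f L) / L ^ 2 - t * deriv f 0 / L ≤ a := by
    have hbound := hab L ⟨by linarith, le_rfl⟩
    rw [div_sub_div _ _ (by positivity) hL.ne', div_le_iff₀ (by positivity)]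
    nlinarith
  nlinarith [mul_le_mul_of_nonneg_right ha (sq_nonneg x)]

/-- **Lemma 1, `ℒ₁` part (upper bound)**: under the stated conditions, the parabola
with coefficients `α_f(L,t) = ℒ₁(t f(L))/L² − t f′(0)/L` and `γ_f(t) = t f′(0)`
is pointwise minimal among all parabolas `a x² + b x` dominating `ℒ₁(t f(x))` on `[-L, L]`.  Here `t < t* = min{1/(2|f(L)|), 1/(2|f(−L)|)}`
is expressed as `2 t |f(L)| < 1` and `2 t |f(−L)| < 1`. -/
theorem L1_quadratic_bound_optimal
    (f : ℝ → ℝ) (hmono : Monotone f) (hdiff : Differentiable ℝ f) (hf0 : f 0 = 0)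
    (L : ℝ) (hL : 0 < L) (t : ℝ) (ht0 : 0 ≤ t)
    (htL : 2 * t * |f L| < 1) (htmL : 2 * t * |f (-L)| < 1)
    (hcond1 : ∀ x ∈ Set.Ioc (0 : ℝ) L,
      x * (deriv (fun y => L1 (t * f y)) x / 2 + t * deriv f 0) ≥ L1 (t * f x))
    (hcond2 : ∀ x ∈ Set.Ioc (0 : ℝ) L,
      (L1 (t * f x) - L1 (t * f (-x))) / (2 * x) ≥ t * deriv f 0) :
    ∀ a b : ℝ,
      (∀ x ∈ Set.Icc (-L) L, L1 (t * f x) ≤ a * x ^ 2 + b * x) →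
      ∀ x ∈ Set.Icc (-L) L,
        (L1 (t * f L) / L ^ 2 - t * deriv f 0 / L) * x ^ 2 + (t * deriv f 0) * x ≤
          a * x ^ 2 + b * x :=
  L1_quadratic_bound_optimal_general f hdiff hf0 L hL t
end

section
/- Let Q = Σ_{i=1}^n η_i(Z_i + δ_i)² where Z_1,…,Z_n are independent standard normal random variables and η_i, δ_i are real constants, not all η_i zero. Let L = max_i |η_i|, ξ = Σ_i η_i δ_i² + Σ_i η_i, and for t ∈ (0, 1/(2L)) define α(L,t) = ℒ₁(tL)/L² − t/L, β(L,t) = tL/(L²(1 − 2tL)) − t/L, and ν(t) = 2(β(L,t) Σ_i η_i² δ_i² + α(L,t) Σ_i η_i²). Then for every q > ξ and every t ∈ (0, 1/(2L)), P(Q > q) ≤ exp(ν(t)/2 − (q − ξ)t); and for every q < ξ and every t ∈ (0, 1/(2L)), P(Q < q) ≤ exp(ν(t)/2 − (ξ − q)t). -/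
/-!
Each summand `ηᵢ(Zᵢ + δᵢ)²` has the explicit moment generating function
`u ↦ exp(ℒ₁(uηᵢ) + ℒ₂(uηᵢ)δᵢ²)` (a Gaussian integral), and independence multiplies these.
Both `ℒ₁(y) - y` and `ℒ₂(y) - y` are `y²` times a function that on `[-x, x]` is largest at `x`
(for `ℒ₁` a power series with nonnegative coefficients, for `ℒ₂` it is `2/(1 - 2y)`), so for
`|y| ≤ x < 1/2` they are at most `(y/x)²(ℒ(x) - x)`. With `x = tL` and `y = ±tηᵢ` this bounds
the cumulant generating function of `Q` at `±t` by `±tξ + ν(t)/2`, and Chernoff's inequality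
gives both tails.
-/

open MeasureTheory ProbabilityTheory Real

noncomputable def L2 (y : ℝ) : ℝ := y / (1 - 2 * y)

lemma hasSum_L1_sub_self {y : ℝ} (hy : |y| < 1 / 2) :
    HasSum (fun n : ℕ => (2 * y) ^ (n + 2) / (n + 2) / 2) (L1 y - y) := by
  have h2y : |2 * y| < 1 := by rw [abs_mul, abs_two]; linarith
  have hL1 : HasSum (fun n : ℕ => (2 * y) ^ (n + 1) / (n + 1) / 2) (L1 y) :=
    (hasSum_pow_div_log_of_abs_lt_one h2y).div_const 2
  simpa [add_assoc, one_add_one_eq_two] using (hasSum_nat_add_iff' 1).mpr hL1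

lemma L1_sub_self_le {x y : ℝ} (hx0 : 0 < x) (hx : x < 1 / 2) (hy : |y| ≤ x) :
    L1 y - y ≤ y ^ 2 / x ^ 2 * (L1 x - x) := by
  refine hasSum_le (fun n => ?_) (hasSum_L1_sub_self (hy.trans_lt hx))
    ((hasSum_L1_sub_self (by rwa [abs_of_pos hx0])).mul_left (y ^ 2 / x ^ 2))
  have hpow : (2 * y) ^ (n + 2) ≤ y ^ 2 / x ^ 2 * (2 * x) ^ (n + 2) :=
    calc (2 * y) ^ (n + 2) ≤ |2 * y| ^ (n + 2) := by rw [← abs_pow]; exact le_abs_self _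
      _ = 2 ^ (n + 2) * (|y| ^ n * y ^ 2) := by
        rw [abs_mul, abs_two, mul_pow, pow_add |y|, sq_abs]
      _ ≤ 2 ^ (n + 2) * (x ^ n * y ^ 2) := by gcongr
      _ = y ^ 2 / x ^ 2 * (2 * x) ^ (n + 2) := by field_simp; ring
  calc (2 * y) ^ (n + 2) / (n + 2) / 2 ≤ y ^ 2 / x ^ 2 * (2 * x) ^ (n + 2) / (n + 2) / 2 := by
        gcongr
    _ = y ^ 2 / x ^ 2 * ((2 * x) ^ (n + 2) / (n + 2) / 2) := by ring

lemma L2_sub_self_le {x y : ℝ} (hx0 : 0 < x) (hx : x < 1 / 2) (hy : |y| ≤ x) :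
    L2 y - y ≤ y ^ 2 / x ^ 2 * (L2 x - x) := by
  have hx2 : 0 < 1 - 2 * x := by linarith
  have hy2 : 0 < 1 - 2 * y := by linarith [le_abs_self y]
  calc L2 y - y = 2 * y ^ 2 / (1 - 2 * y) := by
        rw [L2, eq_div_iff hy2.ne', sub_mul, div_mul_cancel₀ _ hy2.ne']; ring
    _ ≤ 2 * y ^ 2 / (1 - 2 * x) := by gcongr; linarith [le_abs_self y]
    _ = y ^ 2 / x ^ 2 * (L2 x - x) := by rw [L2]; field_simp; ring

lemma L1_add_L2_mul_sq_le {t L η u : ℝ} (d : ℝ) (ht : 0 < t) (hL : 0 < L) (htL : t * L < 1 / 2)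
    (hη : |η| ≤ L) (hu : |u| = t) :
    L1 (u * η) + L2 (u * η) * d ^ 2 ≤
      u * (η * d ^ 2 + η) + (t * L / (L ^ 2 * (1 - 2 * t * L)) - t / L) * (η ^ 2 * d ^ 2) +
        (L1 (t * L) / L ^ 2 - t / L) * η ^ 2 := by
  have hy : |u * η| ≤ t * L := by rw [abs_mul, hu]; gcongr
  have hratio : (u * η) ^ 2 / (t * L) ^ 2 = η ^ 2 / L ^ 2 := by
    rw [mul_pow, mul_pow, ← sq_abs u, hu]; field_simp
  have h1 := L1_sub_self_le (mul_pos ht hL) htL hy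
  have h2 := L2_sub_self_le (mul_pos ht hL) htL hy
  rw [hratio] at h1 h2
  have e1 : η ^ 2 / L ^ 2 * (L1 (t * L) - t * L) = (L1 (t * L) / L ^ 2 - t / L) * η ^ 2 := by
    field_simp
  have e2 : η ^ 2 / L ^ 2 * (L2 (t * L) - t * L) * d ^ 2 =
      (t * L / (L ^ 2 * (1 - 2 * t * L)) - t / L) * (η ^ 2 * d ^ 2) := by
    have : 1 - 2 * t * L ≠ 0 := by linarith
    rw [L2, ← mul_assoc 2 t L]; field_simp
  nlinarith [mul_le_mul_of_nonneg_right h2 (sq_nonneg d)]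

-- Completing the square: the integrand is a multiple of a Gaussian density of variance `1/(1-2s)`.
lemma gaussianPDFReal_mul_exp_mul_sq_add {s : ℝ} (d : ℝ) (hs : s < 1 / 2) (x : ℝ) :
    gaussianPDFReal 0 1 x * exp (s * (x + d) ^ 2) =
      exp (L2 s * d ^ 2) * ((√(2 * π))⁻¹ *
        exp (-((1 - 2 * s) / 2) * (x - 2 * s * d / (1 - 2 * s)) ^ 2)) := by
  have hu : 1 - 2 * s ≠ 0 := by linarith
  simp only [gaussianPDFReal, L2, NNReal.coe_one, mul_one, sub_zero]
  rw [mul_assoc, ← exp_add, mul_left_comm, ← exp_add]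
  congr 2
  field_simp
  ring

lemma integral_exp_mul_sq_add_gaussianReal {s : ℝ} (d : ℝ) (hs : s < 1 / 2) :
    ∫ x, exp (s * (x + d) ^ 2) ∂gaussianReal 0 1 = exp (L1 s + L2 s * d ^ 2) := by
  have hu : 0 < 1 - 2 * s := by linarith
  have hnorm : (√(2 * π))⁻¹ * √(π / ((1 - 2 * s) / 2)) = exp (L1 s) := by
    rw [show π / ((1 - 2 * s) / 2) = 2 * π / (1 - 2 * s) by field_simp, sqrt_div (by positivity),
      ← exp_log (sqrt_pos.mpr hu), log_sqrt hu.le, L1, neg_div, exp_neg]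
    have : √(2 * π) ≠ 0 := by positivity
    field_simp
  simp_rw [integral_gaussianReal_eq_integral_smul one_ne_zero, smul_eq_mul,
    gaussianPDFReal_mul_exp_mul_sq_add d hs]
  rw [integral_const_mul, integral_const_mul, integral_sub_right_eq_self
      (fun x => exp (-((1 - 2 * s) / 2) * x ^ 2)), integral_gaussian, hnorm, ← exp_add, add_comm]

lemma mgf_mul_sq_add_of_map_eq_gaussianReal {Ω : Type*} [MeasurableSpace Ω] {μ : Measure Ω}
    {W : Ω → ℝ} (hW : μ.map W = gaussianReal 0 1) {c u : ℝ} (d : ℝ) (hu : u * c < 1 / 2) :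
    mgf (fun ω => c * (W ω + d) ^ 2) μ u = exp (L1 (u * c) + L2 (u * c) * d ^ 2) := by
  -- `μ.map W` is `0` unless `W` is a.e.-measurable
  have hWm : AEMeasurable W μ := .of_map_ne_zero (by rw [hW]; exact NeZero.ne _)
  rw [← integral_exp_mul_sq_add_gaussianReal d hu, ← hW, mgf, integral_map hWm (by fun_prop)]
  simp only [mul_assoc]

section IndependentGaussians

variable {Ω ι : Type*} [MeasurableSpace Ω] {μ : Measure Ω} [Fintype ι] {Z : ι → Ω → ℝ}

lemma mgf_sum_mul_sq_add (hindep : iIndepFun Z μ) (hZ : ∀ i, μ.map (Z i) = gaussianReal 0 1)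
    (η δ : ι → ℝ) {u : ℝ} (hu : ∀ i, u * η i < 1 / 2) :
    mgf (fun ω => ∑ i, η i * (Z i ω + δ i) ^ 2) μ u =
      exp (∑ i, (L1 (u * η i) + L2 (u * η i) * δ i ^ 2)) := by
  have hZm : ∀ i, AEMeasurable (Z i) μ := fun i =>
    .of_map_ne_zero (by rw [hZ i]; exact NeZero.ne _)
  let X : ι → Ω → ℝ := fun i ω => η i * (Z i ω + δ i) ^ 2
  have hX : iIndepFun X μ := hindep.comp (fun i x => η i * (x + δ i) ^ 2) fun i => by fun_prop
  have hsum : (fun ω => ∑ i, X i ω) = ∑ i, X i := by ext ω; simp only [Finset.sum_apply]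
  rw [hsum, hX.mgf_sum₀ (fun i => by fun_prop), exp_sum]
  exact Finset.prod_congr rfl fun i _ => mgf_mul_sq_add_of_map_eq_gaussianReal (hZ i) (δ i) (hu i)

lemma mgf_sum_mul_sq_add_le (hindep : iIndepFun Z μ) (hZ : ∀ i, μ.map (Z i) = gaussianReal 0 1)
    (η δ : ι → ℝ) {t L u : ℝ} (ht : 0 < t) (hL : 0 < L) (htL : t * L < 1 / 2)
    (hη : ∀ i, |η i| ≤ L) (hu : |u| = t) :
    Integrable (fun ω => exp (u * ∑ i, η i * (Z i ω + δ i) ^ 2)) μ ∧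
    mgf (fun ω => ∑ i, η i * (Z i ω + δ i) ^ 2) μ u ≤
      exp (u * ((∑ i, η i * δ i ^ 2) + ∑ i, η i) +
        ((t * L / (L ^ 2 * (1 - 2 * t * L)) - t / L) * (∑ i, η i ^ 2 * δ i ^ 2) +
          (L1 (t * L) / L ^ 2 - t / L) * (∑ i, η i ^ 2))) := by
  have : IsProbabilityMeasure μ := hindep.isProbabilityMeasure
  have huη : ∀ i, u * η i < 1 / 2 := fun i =>
    (le_abs_self _).trans_lt <| by rw [abs_mul, hu]; nlinarith [hη i, abs_nonneg (η i)]
  rw [← mgf_pos_iff, mgf_sum_mul_sq_add hindep hZ η δ huη]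
  refine ⟨exp_pos _, exp_le_exp.mpr ?_⟩
  calc _ ≤ ∑ i, (u * (η i * δ i ^ 2 + η i) +
          (t * L / (L ^ 2 * (1 - 2 * t * L)) - t / L) * (η i ^ 2 * δ i ^ 2) +
          (L1 (t * L) / L ^ 2 - t / L) * η i ^ 2) :=
        Finset.sum_le_sum fun i _ => L1_add_L2_mul_sq_le (δ i) ht hL htL (hη i) hu
    _ = _ := by simp only [Finset.sum_add_distrib, ← Finset.mul_sum]; ring

end IndependentGaussians

section Chernoff

variable {Ω : Type*} [MeasurableSpace Ω] {μ : Measure Ω} [IsFiniteMeasure μ] {Y : Ω → ℝ}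
  {t ξ c : ℝ}

lemma measure_ge_le_of_mgf_le (ht : 0 ≤ t) (h_int : Integrable (fun ω => exp (t * Y ω)) μ)
    (h : mgf Y μ t ≤ exp (t * ξ + c)) (q : ℝ) :
    μ {ω | q ≤ Y ω} ≤ ENNReal.ofReal (exp (c - (q - ξ) * t)) := by
  rw [← ENNReal.ofReal_toReal (measure_ne_top μ _)]
  refine ENNReal.ofReal_le_ofReal ((measure_ge_le_exp_mul_mgf q ht h_int).trans ?_)
  calc exp (-t * q) * mgf Y μ t ≤ exp (-t * q) * exp (t * ξ + c) := by gcongr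
    _ = exp (c - (q - ξ) * t) := by rw [← exp_add]; ring_nf

lemma measure_le_le_of_mgf_le (ht : 0 ≤ t) (h_int : Integrable (fun ω => exp (-t * Y ω)) μ)
    (h : mgf Y μ (-t) ≤ exp (-t * ξ + c)) (q : ℝ) :
    μ {ω | Y ω ≤ q} ≤ ENNReal.ofReal (exp (c - (ξ - q) * t)) := by
  have := measure_ge_le_of_mgf_le (Y := -Y) (ξ := -ξ) ht (by simpa [mul_neg] using h_int)
    (by rwa [mgf_neg, mul_neg, ← neg_mul]) (-q)
  simpa [neg_le_neg_iff, sub_eq_add_neg, add_comm] using this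

end Chernoff

theorem Q_identity_tail_bounds_general
    (n : ℕ) (Ω : Type*) [MeasureSpace Ω] [IsProbabilityMeasure (ℙ : Measure Ω)]
    (Z : Fin n → Ω → ℝ)
    (hZindep : iIndepFun Z ℙ)
    (hZdist : ∀ i, Measure.map (Z i) ℙ = gaussianReal 0 1)
    (η δ : Fin n → ℝ) (hη : ∃ i, η i ≠ 0)
    (L ξ : ℝ)
    (hL : IsGreatest (Set.range fun i => |η i|) L)
    (hξ : ξ = (∑ i, η i * δ i ^ 2) + ∑ i, η i) :
    (∀ q > ξ, ∀ t ∈ Set.Ioo (0 : ℝ) (1 / (2 * L)),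
      ℙ {ω | (∑ i, η i * (Z i ω + δ i) ^ 2) > q} ≤
        ENNReal.ofReal (Real.exp
          (2 * ((t * L / (L ^ 2 * (1 - 2 * t * L)) - t / L) * (∑ i, η i ^ 2 * δ i ^ 2) +
                (L1 (t * L) / L ^ 2 - t / L) * (∑ i, η i ^ 2)) / 2
            - (q - ξ) * t))) ∧
    (∀ q < ξ, ∀ t ∈ Set.Ioo (0 : ℝ) (1 / (2 * L)),
      ℙ {ω | (∑ i, η i * (Z i ω + δ i) ^ 2) < q} ≤
        ENNReal.ofReal (Real.exp
          (2 * ((t * L / (L ^ 2 * (1 - 2 * t * L)) - t / L) * (∑ i, η i ^ 2 * δ i ^ 2) +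
                (L1 (t * L) / L ^ 2 - t / L) * (∑ i, η i ^ 2)) / 2
            - (ξ - q) * t))) := by
  have hη_le : ∀ i, |η i| ≤ L := fun i => hL.2 ⟨i, rfl⟩
  have hL0 : 0 < L := by
    obtain ⟨i, hi⟩ := hη
    exact (abs_pos.mpr hi).trans_le (hη_le i)
  have htL : ∀ t ∈ Set.Ioo (0 : ℝ) (1 / (2 * L)), t * L < 1 / 2 := fun t ht => by
    linarith [(lt_div_iff₀ (by positivity : (0 : ℝ) < 2 * L)).mp ht.2]
  subst hξ
  refine ⟨fun q _ t ht => ?_, fun q _ t ht => ?_⟩ <;> rw [mul_div_cancel_left₀ _ two_ne_zero]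
  · obtain ⟨h_int, h_mgf⟩ := mgf_sum_mul_sq_add_le hZindep hZdist η δ ht.1 hL0 (htL t ht) hη_le
      (abs_of_pos ht.1)
    exact (measure_ge_le_of_mgf_le ht.1.le h_int h_mgf q).trans'
      (measure_mono (Set.ofPred_subset_ofPred.mpr fun _ => le_of_lt))
  · obtain ⟨h_int, h_mgf⟩ := mgf_sum_mul_sq_add_le hZindep hZdist η δ ht.1 hL0 (htL t ht) hη_le
      (u := -t) (by rw [abs_neg, abs_of_pos ht.1])
    exact (measure_le_le_of_mgf_le ht.1.le h_int h_mgf q).trans'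
      (measure_mono (Set.ofPred_subset_ofPred.mpr fun _ => le_of_lt))

/-- **Corollary 1 (identity case)**: for `Q = Σᵢ ηᵢ(Zᵢ + δᵢ)²` with `Zᵢ` i.i.d. standard
normal, not all `ηᵢ` zero, `L = maxᵢ |ηᵢ|`, `ξ = Σᵢ ηᵢ δᵢ² + Σᵢ ηᵢ`,
`α(L,t) = ℒ₁(tL)/L² − t/L`, `β(L,t) = tL/(L²(1 − 2tL)) − t/L` and
`ν(t) = 2(β(L,t) Σᵢ ηᵢ² δᵢ² + α(L,t) Σᵢ ηᵢ²)`, we have, for every `t ∈ (0, 1/(2L))`,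
`P(Q > q) ≤ exp(ν(t)/2 − (q − ξ) t)` for `q > ξ` and
`P(Q < q) ≤ exp(ν(t)/2 − (ξ − q) t)` for `q < ξ`. -/
theorem Q_identity_tail_bounds
    (n : ℕ) (Ω : Type*) [MeasureSpace Ω] [IsProbabilityMeasure (ℙ : Measure Ω)]
    (Z : Fin n → Ω → ℝ) (hZmeas : ∀ i, Measurable (Z i))
    (hZindep : iIndepFun Z ℙ)
    (hZdist : ∀ i, Measure.map (Z i) ℙ = gaussianReal 0 1)
    (η δ : Fin n → ℝ) (hη : ∃ i, η i ≠ 0)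
    (L ξ : ℝ)
    (hL : IsGreatest (Set.range fun i => |η i|) L)
    (hξ : ξ = (∑ i, η i * δ i ^ 2) + ∑ i, η i) :
    (∀ q > ξ, ∀ t ∈ Set.Ioo (0 : ℝ) (1 / (2 * L)),
      ℙ {ω | (∑ i, η i * (Z i ω + δ i) ^ 2) > q} ≤
        ENNReal.ofReal (Real.exp
          (2 * ((t * L / (L ^ 2 * (1 - 2 * t * L)) - t / L) * (∑ i, η i ^ 2 * δ i ^ 2) +
                (L1 (t * L) / L ^ 2 - t / L) * (∑ i, η i ^ 2)) / 2
            - (q - ξ) * t))) ∧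
    (∀ q < ξ, ∀ t ∈ Set.Ioo (0 : ℝ) (1 / (2 * L)),
      ℙ {ω | (∑ i, η i * (Z i ω + δ i) ^ 2) < q} ≤
        ENNReal.ofReal (Real.exp
          (2 * ((t * L / (L ^ 2 * (1 - 2 * t * L)) - t / L) * (∑ i, η i ^ 2 * δ i ^ 2) +
                (L1 (t * L) / L ^ 2 - t / L) * (∑ i, η i ^ 2)) / 2
            - (ξ - q) * t))) :=
  Q_identity_tail_bounds_general n Ω Z hZindep hZdist η δ hη L ξ hL hξ
end

section
/- Let p ≥ 2 be an integer and Q_f = Σ_{i=1}^n η_i^p (Z_i + δ_i)² where Z_1,…,Z_n are independent standard normal random variables and η_i, δ_i are real constants, not all η_i zero. Let L = max_i |η_i|, d = max_i |η_i^p| = L^p, and for t ∈ (0, 1/(2L^p)) define α(L,t) = ℒ₁(tL^p)/L², β(L,t) = tL^{p−2}/(1 − 2tL^p), and ν(t) = 2(β(L,t) Σ_i η_i² δ_i² + α(L,t) Σ_i η_i²). Then for every q > 0 and every t ∈ (0, 1/(2L^p)), P(Q_f > q) ≤ exp(ν(t)/2 − q t); and for every q < 0 and every t ∈ (0, 1/(2L^p)),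 P(Q_f < q) ≤ exp(ν(t)/2 + q t). -/
open MeasureTheory ProbabilityTheory Real

lemma gauss_key (s b : ℝ) (hs : s < 1/2) (x : ℝ) :
    rexp (s * (x + b)^2) * gaussianPDFReal 0 1 x =
      (√(2 * π))⁻¹ * (rexp (s * b^2 / (1 - 2*s)) *
        rexp (-((1 - 2*s)/2) * (x - 2*s*b/(1-2*s))^2)) := by
  have h2 : (1 - 2*s) ≠ 0 := by nlinarith
  rw [gaussianPDFReal]
  simp only [NNReal.coe_one, mul_one, sub_zero]
  rw [mul_comm (rexp _), mul_assoc, ← Real.exp_add, ← Real.exp_add]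
  have h3 : - x^2 / 2 + s * (x + b)^2 = s * b^2 / (1 - 2*s) + -((1 - 2*s)/2) * (x - 2*s*b/(1-2*s))^2 := by
    field_simp
    ring
  rw [h3]

lemma gauss_integral (s b : ℝ) (hs : s < 1/2) :
    ∫ x, rexp (s * (x + b)^2) ∂(gaussianReal 0 1) =
      rexp (s * b^2 / (1 - 2*s)) / Real.sqrt (1 - 2*s) := by
  have h2 : (0:ℝ) < 1 - 2*s := by linarith
  rw [gaussianReal_of_var_ne_zero 0 one_ne_zero]
  have hpdf : gaussianPDF 0 1 = fun x => (((gaussianPDFReal 0 1 x).toNNReal : NNReal) : ENNReal) := by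
    funext x; rfl
  rw [hpdf, integral_withDensity_eq_integral_smul
    ((measurable_gaussianPDFReal 0 1).real_toNNReal) _]
  simp only [NNReal.smul_def, Real.coe_toNNReal _ (gaussianPDFReal_nonneg 0 1 _), smul_eq_mul]
  have : ∀ x : ℝ, gaussianPDFReal 0 1 x * rexp (s * (x + b)^2) =
      (√(2 * π))⁻¹ * (rexp (s * b^2 / (1 - 2*s)) *
        rexp (-((1 - 2*s)/2) * (x - 2*s*b/(1-2*s))^2)) := by
    intro x; rw [mul_comm]; exact gauss_key s b hs x
  simp_rw [this]
  rw [integral_const_mul, integral_const_mul]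
  have htrans : ∫ x : ℝ, rexp (-((1 - 2*s)/2) * (x - 2*s*b/(1-2*s))^2) =
      ∫ x : ℝ, rexp (-((1 - 2*s)/2) * x^2) := by
    exact integral_sub_right_eq_self (fun x => rexp (-((1 - 2*s)/2) * x^2)) _
  rw [htrans, integral_gaussian]
  have hπ : (0:ℝ) < 2 * π := by positivity
  have h3 : π / ((1 - 2*s)/2) = (2*π) / (1 - 2*s) := by field_simp
  rw [h3, Real.sqrt_div hπ.le]
  have h4 : Real.sqrt (2*π) ≠ 0 := by positivity
  have h5 : Real.sqrt (1 - 2*s) ≠ 0 := by positivity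
  field_simp


lemma gauss_integrable (s b : ℝ) (hs : s < 1/2) :
    Integrable (fun x => rexp (s * (x + b)^2)) (gaussianReal 0 1) := by
  have h2 : (0:ℝ) < 1 - 2*s := by linarith
  rw [gaussianReal_of_var_ne_zero 0 one_ne_zero]
  rw [integrable_withDensity_iff (measurable_gaussianPDF 0 1)
    (ae_of_all _ fun x => ENNReal.ofReal_lt_top)]
  have : ∀ x : ℝ, rexp (s * (x + b)^2) * (gaussianPDF 0 1 x).toReal =
      (√(2 * π))⁻¹ * (rexp (s * b^2 / (1 - 2*s)) *
        rexp (-((1 - 2*s)/2) * (x - 2*s*b/(1-2*s))^2)) := by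
    intro x
    rw [gaussianPDF, ENNReal.toReal_ofReal (gaussianPDFReal_nonneg 0 1 x)]
    exact gauss_key s b hs x
  simp_rw [this]
  refine Integrable.const_mul ?_ _
  refine Integrable.const_mul ?_ _
  exact (integrable_exp_neg_mul_sq (by linarith : (0:ℝ) < (1-2*s)/2)).comp_sub_right _

lemma mgf_sq (c b t : ℝ) {Ω : Type*} [MeasureSpace Ω] {Z : Ω → ℝ}
    (hZm : Measurable Z) (hZd : Measure.map Z ℙ = gaussianReal 0 1)
    (hs : t * c < 1/2) :
    mgf (fun ω => c * (Z ω + b)^2) ℙ t =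
      rexp (t * c * b^2 / (1 - 2*(t*c))) / Real.sqrt (1 - 2*(t*c)) ∧
    Integrable (fun ω => rexp (t * (c * (Z ω + b)^2))) ℙ := by
  have hmeas : Measurable fun x : ℝ => rexp (t * c * (x + b)^2) := by measurability
  have h1 : ∀ ω, rexp (t * (c * (Z ω + b)^2)) = rexp (t * c * (Z ω + b)^2) := by
    intro ω; ring_nf
  constructor
  · rw [mgf]
    simp_rw [h1]
    have := integral_map (μ := (ℙ : Measure Ω)) (f := fun x : ℝ => rexp (t * c * (x + b)^2))
      hZm.aemeasurable hmeas.aestronglyMeasurable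
    rw [← this, hZd, gauss_integral _ _ hs]
  · have := gauss_integrable (t*c) b hs
    rw [← hZd] at this
    have h2 := (integrable_map_measure hmeas.aestronglyMeasurable hZm.aemeasurable).mp this
    simp_rw [h1]
    exact h2

lemma exp_L1 {s : ℝ} (hs : s < 1/2) : rexp (L1 s) = (Real.sqrt (1 - 2*s))⁻¹ := by
  have h : (0:ℝ) < 1 - 2*s := by linarith
  rw [L1, show -Real.log (1-2*s)/2 = Real.log (1-2*s) * (-(1/2)) by ring,
    ← Real.rpow_def_of_pos h, Real.rpow_neg h.le, Real.sqrt_eq_rpow]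

lemma ratio_bound {s c y : ℝ} (hy : y < 1/2) (hsc : s ≤ c) (hcy : c ≤ y) (hc : 0 ≤ c)
    {b2 : ℝ} (hb2 : 0 ≤ b2) :
    s * b2 / (1 - 2*s) ≤ c * b2 / (1 - 2*y) := by
  apply div_le_div₀ (by positivity) (mul_le_mul_of_nonneg_right hsc hb2) (by linarith)
    (by linarith)

lemma L1_le {y lam s : ℝ} (hy0 : 0 ≤ y) (hy : y < 1/2) (hl0 : 0 ≤ lam) (hl1 : lam ≤ 1)
    (hs : s ≤ lam * y) :
    L1 s ≤ lam * L1 y := by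
  have h1 : (0:ℝ) < 1 - 2*(lam*y) := by nlinarith
  have h2 : (0:ℝ) < 1 - 2*y := by linarith
  have hmono : L1 s ≤ L1 (lam*y) := by
    unfold L1
    have : Real.log (1 - 2*(lam*y)) ≤ Real.log (1-2*s) :=
      Real.log_le_log h1 (by linarith)
    linarith
  refine hmono.trans ?_
  unfold L1
  have hlog : lam * Real.log (1-2*y) ≤ Real.log (1 - 2*(lam*y)) := by
    rw [← Real.log_rpow h2]
    apply Real.log_le_log (by positivity)
    calc (1-2*y)^lam = (1 + -(2*y))^lam := by congr 1
      _ ≤ 1 + lam * (-(2*y)) := rpow_one_add_le_one_add_mul_self (by linarith) hl0 hl1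
      _ = 1 - 2*(lam*y) := by ring
  linarith

/-- **Corollary 2 (power case)**: for `p ≥ 2` and `Q_f = Σᵢ ηᵢᵖ(Zᵢ + δᵢ)²` with `Zᵢ`
i.i.d. standard normal, not all `ηᵢ` zero, `L = maxᵢ |ηᵢ|`, `d = maxᵢ |ηᵢᵖ| = Lᵖ`,
`ξ = 0`, `α(L,t) = ℒ₁(tLᵖ)/L²`, `β(L,t) = tLᵖ⁻²/(1 − 2tLᵖ)` and
`ν(t) = 2(β(L,t) Σᵢ ηᵢ² δᵢ² + α(L,t) Σᵢ ηᵢ²)`, we have, for every `t ∈ (0, 1/(2Lᵖ))`,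
`P(Q_f > q) ≤ exp(ν(t)/2 − q t)` for `q > 0` and
`P(Q_f < q) ≤ exp(ν(t)/2 + q t)` for `q < 0`. -/
theorem Q_power_tail_bounds
    (p : ℕ) (hp : 2 ≤ p)
    (n : ℕ) (Ω : Type*) [MeasureSpace Ω] [IsProbabilityMeasure (ℙ : Measure Ω)]
    (Z : Fin n → Ω → ℝ) (hZmeas : ∀ i, Measurable (Z i))
    (hZindep : iIndepFun Z ℙ)
    (hZdist : ∀ i, Measure.map (Z i) ℙ = gaussianReal 0 1)
    (η δ : Fin n → ℝ) (hη : ∃ i, η i ≠ 0)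
    (L d : ℝ)
    (hL : IsGreatest (Set.range fun i => |η i|) L)
    (hd : d = L ^ p) :
    (∀ q > (0 : ℝ), ∀ t ∈ Set.Ioo (0 : ℝ) (1 / (2 * d)),
      ℙ {ω | (∑ i, η i ^ p * (Z i ω + δ i) ^ 2) > q} ≤
        ENNReal.ofReal (Real.exp
          (2 * ((t * L ^ (p - 2) / (1 - 2 * t * L ^ p)) * (∑ i, η i ^ 2 * δ i ^ 2) +
                (L1 (t * L ^ p) / L ^ 2) * (∑ i, η i ^ 2)) / 2
            - q * t))) ∧
    (∀ q < (0 : ℝ), ∀ t ∈ Set.Ioo (0 : ℝ) (1 / (2 * d)),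
      ℙ {ω | (∑ i, η i ^ p * (Z i ω + δ i) ^ 2) < q} ≤
        ENNReal.ofReal (Real.exp
          (2 * ((t * L ^ (p - 2) / (1 - 2 * t * L ^ p)) * (∑ i, η i ^ 2 * δ i ^ 2) +
                (L1 (t * L ^ p) / L ^ 2) * (∑ i, η i ^ 2)) / 2
            + q * t))) := by
  subst hd
  obtain ⟨i₀, hi₀⟩ := hη
  have hLi : ∀ i, |η i| ≤ L := fun i => hL.2 ⟨i, rfl⟩
  have hLpos : (0:ℝ) < L := lt_of_lt_of_le (abs_pos.mpr hi₀) (hLi i₀)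
  have hpp : p - 2 + 2 = p := Nat.sub_add_cancel hp
  have habs : ∀ i, |η i| ^ p ≤ L ^ (p-2) * η i ^ 2 := by
    intro i
    calc |η i| ^ p = |η i| ^ (p-2) * |η i| ^ 2 := by rw [← pow_add, hpp]
      _ ≤ L ^ (p-2) * η i ^ 2 := by
          rw [sq_abs]
          exact mul_le_mul_of_nonneg_right (pow_le_pow_left₀ (abs_nonneg _) (hLi i) _)
            (sq_nonneg _)
  have hetaL : ∀ i, η i ^ 2 ≤ L ^ 2 := by
    intro i
    rw [← sq_abs]
    exact pow_le_pow_left₀ (abs_nonneg _) (hLi i) _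
  have hLp2 : L ^ (p-2) * L ^ 2 = L ^ p := by rw [← pow_add, hpp]
  set X : Fin n → Ω → ℝ := fun i ω => η i ^ p * (Z i ω + δ i) ^ 2 with hX
  have hXm : ∀ i, Measurable (X i) := by
    intro i
    exact (((hZmeas i).add_const _).pow_const 2).const_mul _
  have hXindep : iIndepFun X ℙ :=
    hZindep.comp (fun i x => η i ^ p * (x + δ i) ^ 2)
      (fun i => ((measurable_id.add_const _).pow_const 2).const_mul _)
  -- key claim
  have key : ∀ t ∈ Set.Ioo (0:ℝ) (1/(2*L^p)), ∀ r : ℝ, |r| ≤ t →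
      mgf (fun ω => ∑ i, η i ^ p * (Z i ω + δ i) ^ 2) ℙ r ≤
        rexp ((t * L ^ (p - 2) / (1 - 2 * t * L ^ p)) * (∑ i, η i ^ 2 * δ i ^ 2) +
              (L1 (t * L ^ p) / L ^ 2) * (∑ i, η i ^ 2)) ∧
      Integrable (fun ω => rexp (r * (∑ i, η i ^ p * (Z i ω + δ i) ^ 2))) ℙ := by
    rintro t ⟨ht0, ht1⟩ r hr
    have hLppos : (0:ℝ) < L ^ p := pow_pos hLpos p
    have hy0 : (0:ℝ) < t * L ^ p := by positivity
    have hy : t * L ^ p < 1/2 := by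
      rw [lt_div_iff₀ (by positivity)] at ht1
      nlinarith
    have hsle : ∀ i, r * η i ^ p ≤ t * (L ^ (p-2) * η i ^ 2) := by
      intro i
      calc r * η i ^ p ≤ |r * η i ^ p| := le_abs_self _
        _ = |r| * |η i| ^ p := by rw [abs_mul, abs_pow]
        _ ≤ t * (L ^ (p-2) * η i ^ 2) :=
            mul_le_mul hr (habs i) (pow_nonneg (abs_nonneg _) _) ht0.le
    have hcy : ∀ i, t * (L ^ (p-2) * η i ^ 2) ≤ t * L ^ p := by
      intro i
      apply mul_le_mul_of_nonneg_left _ ht0.le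
      calc L ^ (p-2) * η i ^ 2 ≤ L ^ (p-2) * L ^ 2 :=
            mul_le_mul_of_nonneg_left (hetaL i) (by positivity)
        _ = L ^ p := hLp2
    have hsmall : ∀ i, r * η i ^ p < 1/2 := fun i => lt_of_le_of_lt ((hsle i).trans (hcy i)) hy
    have hmgf_i := fun i => (mgf_sq (η i ^ p) (δ i) r (hZmeas i) (hZdist i) (hsmall i)).1
    have hint_i := fun i => (mgf_sq (η i ^ p) (δ i) r (hZmeas i) (hZdist i) (hsmall i)).2
    have hbound_i : ∀ i, mgf (X i) ℙ r ≤
        rexp (t * (L ^ (p-2) * η i ^ 2) * δ i ^ 2 / (1 - 2*(t * L ^ p)) +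
          η i ^ 2 / L ^ 2 * L1 (t * L ^ p)) := by
      intro i
      rw [hX]
      rw [hmgf_i i, div_eq_mul_inv, ← exp_L1 (hsmall i), ← Real.exp_add, Real.exp_le_exp]
      apply add_le_add
      · exact ratio_bound hy (hsle i) (hcy i) (by positivity) (sq_nonneg _)
      · apply L1_le hy0.le hy (by positivity)
          (by rw [div_le_one (by positivity)]; exact hetaL i)
        calc r * η i ^ p ≤ t * (L ^ (p-2) * η i ^ 2) := hsle i
          _ = η i ^ 2 / L ^ 2 * (t * L ^ p) := by
              rw [← hLp2]; field_simp
    have hfun : (fun ω => ∑ i, η i ^ p * (Z i ω + δ i) ^ 2) = ∑ i, X i := by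
      funext ω; rw [hX]; simp [Finset.sum_apply]
    constructor
    · rw [hfun, hXindep.mgf_sum hXm Finset.univ]
      calc ∏ i, mgf (X i) ℙ r ≤
          ∏ i, rexp (t * (L ^ (p-2) * η i ^ 2) * δ i ^ 2 / (1 - 2*(t * L ^ p)) +
            η i ^ 2 / L ^ 2 * L1 (t * L ^ p)) :=
            Finset.prod_le_prod (fun i _ => mgf_nonneg) (fun i _ => hbound_i i)
        _ = rexp (∑ i, (t * (L ^ (p-2) * η i ^ 2) * δ i ^ 2 / (1 - 2*(t * L ^ p)) +
            η i ^ 2 / L ^ 2 * L1 (t * L ^ p))) := by rw [Real.exp_sum]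
        _ = rexp ((t * L ^ (p - 2) / (1 - 2 * t * L ^ p)) * (∑ i, η i ^ 2 * δ i ^ 2) +
              (L1 (t * L ^ p) / L ^ 2) * (∑ i, η i ^ 2)) := by
            congr 1
            rw [Finset.sum_add_distrib, Finset.mul_sum, Finset.mul_sum]
            congr 1
            · exact Finset.sum_congr rfl (fun i _ => by field_simp)
            · exact Finset.sum_congr rfl (fun i _ => by field_simp)
    · have h := hXindep.integrable_exp_mul_sum (t := r) (s := Finset.univ) hXm
        (fun i _ => hint_i i)
      have heq : (fun ω => rexp (r * (∑ i ∈ Finset.univ, X i) ω)) =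
          (fun ω => rexp (r * ∑ i, η i ^ p * (Z i ω + δ i) ^ 2)) := by
        funext ω; rw [hX]; simp [Finset.sum_apply]
      rwa [heq] at h
  set ν2 : ℝ → ℝ := fun t => (t * L ^ (p - 2) / (1 - 2 * t * L ^ p)) * (∑ i, η i ^ 2 * δ i ^ 2) +
      (L1 (t * L ^ p) / L ^ 2) * (∑ i, η i ^ 2) with hν2
  constructor
  · intro q hq t ht
    obtain ⟨hb, hint⟩ := key t ht t (by rw [abs_of_pos ht.1])
    have cher := measure_ge_le_exp_mul_mgf (μ := (ℙ : Measure Ω))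
      (X := fun ω => ∑ i, η i ^ p * (Z i ω + δ i) ^ 2) q ht.1.le hint
    have hreal : (ℙ {ω | q ≤ ∑ i, η i ^ p * (Z i ω + δ i) ^ 2}).toReal ≤
        rexp (2 * ν2 t / 2 - q * t) := by
      refine cher.trans ?_
      calc rexp (-t * q) * mgf (fun ω => ∑ i, η i ^ p * (Z i ω + δ i) ^ 2) ℙ t ≤
          rexp (-t * q) * rexp (ν2 t) := by
            exact mul_le_mul_of_nonneg_left hb (Real.exp_pos _).le
        _ = rexp (2 * ν2 t / 2 - q * t) := by rw [← Real.exp_add]; congr 1; ring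
    calc ℙ {ω | (∑ i, η i ^ p * (Z i ω + δ i) ^ 2) > q} ≤
        ℙ {ω | q ≤ ∑ i, η i ^ p * (Z i ω + δ i) ^ 2} :=
          measure_mono (Set.setOf_subset_setOf.mpr (fun ω h => le_of_lt h))
      _ = ENNReal.ofReal ((ℙ {ω | q ≤ ∑ i, η i ^ p * (Z i ω + δ i) ^ 2}).toReal) :=
          (ENNReal.ofReal_toReal (measure_ne_top _ _)).symm
      _ ≤ ENNReal.ofReal (rexp (2 * ν2 t / 2 - q * t)) := ENNReal.ofReal_le_ofReal hreal
  · intro q hq t ht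
    obtain ⟨hb, hint⟩ := key t ht (-t) (by rw [abs_neg, abs_of_pos ht.1])
    have cher := measure_le_le_exp_mul_mgf (μ := (ℙ : Measure Ω))
      (X := fun ω => ∑ i, η i ^ p * (Z i ω + δ i) ^ 2) q (neg_nonpos.mpr ht.1.le) hint
    have hreal : (ℙ {ω | (∑ i, η i ^ p * (Z i ω + δ i) ^ 2) ≤ q}).toReal ≤
        rexp (2 * ν2 t / 2 + q * t) := by
      refine cher.trans ?_
      calc rexp (-(-t) * q) * mgf (fun ω => ∑ i, η i ^ p * (Z i ω + δ i) ^ 2) ℙ (-t) ≤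
          rexp (-(-t) * q) * rexp (ν2 t) := by
            exact mul_le_mul_of_nonneg_left hb (Real.exp_pos _).le
        _ = rexp (2 * ν2 t / 2 + q * t) := by rw [← Real.exp_add]; congr 1; ring
    calc ℙ {ω | (∑ i, η i ^ p * (Z i ω + δ i) ^ 2) < q} ≤
        ℙ {ω | (∑ i, η i ^ p * (Z i ω + δ i) ^ 2) ≤ q} :=
          measure_mono (Set.setOf_subset_setOf.mpr (fun ω h => le_of_lt h))
      _ = ENNReal.ofReal ((ℙ {ω | (∑ i, η i ^ p * (Z i ω + δ i) ^ 2) ≤ q}).toReal) :=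
          (ENNReal.ofReal_toReal (measure_ne_top _ _)).symm
      _ ≤ ENNReal.ofReal (rexp (2 * ν2 t / 2 + q * t)) := ENNReal.ofReal_le_ofReal hreal
end
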